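/- arXiv:2111.14689 — 3 statements merged into one kernel-verified Lean document; each statement's English description precedes it below -/
import Mathlib

section
/- The p-adic completion functor on abelian groups is idempotent: for any abelian group A, the natural map from the p-adic completion of A to the p-adic completion of the p-adic completion of A is an isomorphism. -/
/-- The multiplication-by-`c` homomorphism on an abelian group. -/
def zsmulHom {A : Type*} [AddCommGroup A] (c : ℤ) : A →+ A where
  toFun a := c • a
  map_zero' := smul_zero c
  map_add' x y := smul_add c x y

@[simp] lemma zsmulHom_apply {A : Type*} [AddCommGroup A] (c : ℤ) (a : A) :
    zsmulHom c a = c • a := rfl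

/-- The subgroup `cA` of an abelian group `A`. -/
def gsub (A : Type*) [AddCommGroup A] (c : ℤ) : AddSubgroup A := (zsmulHom c).range

lemma gsub_le_comap {A B : Type*} [AddCommGroup A] [AddCommGroup B] (f : A →+ B)
    {c d : ℤ} (h : c ∣ d) : gsub A d ≤ (gsub B c).comap f := by
  rintro a ⟨y, rfl⟩
  obtain ⟨k, rfl⟩ := h
  simp only [AddSubgroup.mem_comap]
  exact ⟨k • f y, by rw [zsmulHom_apply, zsmulHom_apply, map_zsmul, mul_smul]⟩

/-- The completion `lim_i A/(N i)A` of `A` along a family of integers `N`, realised as the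
subgroup of compatible families in the product of the quotients `A/(N i)A`, with transition
maps given whenever `N i ∣ N j`. -/
def gcomp (A : Type*) [AddCommGroup A] {ι : Type*} (N : ι → ℤ) :
    AddSubgroup (∀ i, A ⧸ gsub A (N i)) where
  carrier := {x | ∀ (i j : ι) (h : N i ∣ N j),
    QuotientAddGroup.map (gsub A (N j)) (gsub A (N i)) (AddMonoidHom.id A)
      (gsub_le_comap (AddMonoidHom.id A) h) (x j) = x i}
  add_mem' := by
    intro x y hx hy i j h
    simp only [Pi.add_apply, map_add]
    rw [hx i j h, hy i j h]
  zero_mem' := by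
    intro i j h
    simp
  neg_mem' := by
    intro x hx i j h
    simp only [Pi.neg_apply, map_neg]
    rw [hx i j h]


/-- The canonical map from a group to its completion along the family `N`. -/
def toComp (A : Type*) [AddCommGroup A] {ι : Type*} (N : ι → ℤ) : A →+ gcomp A N where
  toFun a := ⟨fun _ => QuotientAddGroup.mk a, by
    intro i j h
    simp [QuotientAddGroup.map_mk]⟩
  map_zero' := Subtype.ext (funext fun i => rfl)
  map_add' x y := Subtype.ext (funext fun i => rfl)

section Aux

variable {A : Type*} [AddCommGroup A] (p : ℕ)

lemma mem_gsub_iff {c : ℤ} {a : A} : a ∈ gsub A c ↔ ∃ y, c • y = a := Iff.rfl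

lemma zsmul_quot_eq_zero {m k : ℕ} (h : m ≤ k) (q : A ⧸ gsub A ((p:ℤ)^m)) :
    (p:ℤ)^k • q = 0 := by
  induction q using QuotientAddGroup.induction_on with
  | H a =>
    rw [← QuotientAddGroup.mk_zsmul, QuotientAddGroup.eq_zero_iff]
    exact ⟨(p:ℤ)^(k-m) • a, by rw [zsmulHom_apply, ← mul_smul, ← pow_add,
      Nat.add_sub_cancel' h]⟩

lemma le_of_pow_dvd (hp : p.Prime) {i j : ℕ} (h : (p:ℤ)^i ∣ (p:ℤ)^j) : i ≤ j := by
  have hP : Prime (p:ℤ) := Nat.prime_iff_prime_int.mp hp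
  exact (pow_dvd_pow_iff hP.ne_zero hP.not_unit).mp h

/-- Transition map of the limit system. -/
abbrev gtrans {ι : Type*} (N : ι → ℤ) (i j : ι) (h : N i ∣ N j) :
    (A ⧸ gsub A (N j)) →+ (A ⧸ gsub A (N i)) :=
  QuotientAddGroup.map (gsub A (N j)) (gsub A (N i)) (AddMonoidHom.id A)
    (gsub_le_comap (AddMonoidHom.id A) h)

/-- The sum `∑ p^k • t k` in the completion, defined componentwise. -/
def seriesSum (hp : p.Prime) (t : ℕ → ↥(gcomp A (fun n : ℕ => (p:ℤ)^n))) :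
    ↥(gcomp A (fun n : ℕ => (p:ℤ)^n)) :=
  ⟨fun m => ∑ k ∈ Finset.range m, (p:ℤ)^k • ((t k : ∀ i, A ⧸ gsub A ((p:ℤ)^i)) m), by
    intro i j h
    have hij : i ≤ j := le_of_pow_dvd p hp h
    rw [map_sum]
    have hmap : ∀ k, gtrans (fun n : ℕ => (p:ℤ)^n) i j h
        ((p:ℤ)^k • ((t k : ∀ i, A ⧸ gsub A ((p:ℤ)^i)) j))
        = (p:ℤ)^k • ((t k : ∀ i, A ⧸ gsub A ((p:ℤ)^i)) i) := by
      intro k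
      rw [map_zsmul, (t k).2 i j h]
    rw [Finset.sum_congr rfl (fun k _ => hmap k),
      ← Finset.sum_range_add_sum_Ico _ hij]
    have : ∑ k ∈ Finset.Ico i j, (p:ℤ)^k • ((t k : ∀ i, A ⧸ gsub A ((p:ℤ)^i)) i) = 0 :=
      Finset.sum_eq_zero fun k hk =>
        zsmul_quot_eq_zero p (Finset.mem_Ico.mp hk).1 _
    rw [this, add_zero]⟩

end Aux

section Shift

variable {A : Type*} [AddCommGroup A] (p : ℕ)

lemma seriesSum_shift (hp : p.Prime) (t : ℕ → ↥(gcomp A (fun n : ℕ => (p:ℤ)^n))) (n : ℕ) :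
    seriesSum p hp t - ∑ k ∈ Finset.range n, (p:ℤ)^k • t k
      = (p:ℤ)^n • seriesSum p hp (fun j => t (n + j)) := by
  apply Subtype.ext
  funext m
  have hcoe : ∀ (x : ↥(gcomp A (fun n : ℕ => (p:ℤ)^n))) (i : ℕ),
      ((x : ∀ i, A ⧸ gsub A ((p:ℤ)^i)) i) = (x : ∀ i, A ⧸ gsub A ((p:ℤ)^i)) i := fun _ _ => rfl
  set v : ℕ → A ⧸ gsub A ((p:ℤ)^m) :=
    fun k => (p:ℤ)^k • ((t k : ∀ i, A ⧸ gsub A ((p:ℤ)^i)) m) with hv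
  have hz : ∀ k ∈ Finset.Ico m (n + m), v k = 0 :=
    fun k hk => zsmul_quot_eq_zero p (Finset.mem_Ico.mp hk).1 _
  have h1 : ∑ k ∈ Finset.range m, v k = ∑ k ∈ Finset.range (n + m), v k := by
    rw [← Finset.sum_range_add_sum_Ico v (Nat.le_add_left m n), Finset.sum_eq_zero hz, add_zero]
  have h2 : ∑ k ∈ Finset.range n, v k + ∑ k ∈ Finset.Ico n (n + m), v k
      = ∑ k ∈ Finset.range (n + m), v k :=
    Finset.sum_range_add_sum_Ico v (Nat.le_add_right n m)
  have hL : ((seriesSum p hp t - ∑ k ∈ Finset.range n, (p:ℤ)^k • t k :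
        ↥(gcomp A (fun n : ℕ => (p:ℤ)^n))) : ∀ i, A ⧸ gsub A ((p:ℤ)^i)) m
      = ∑ k ∈ Finset.range m, v k - ∑ k ∈ Finset.range n, v k := by
    simp [seriesSum, v, Finset.sum_apply]
  have hR : (((p:ℤ)^n • seriesSum p hp (fun j => t (n + j)) :
        ↥(gcomp A (fun n : ℕ => (p:ℤ)^n))) : ∀ i, A ⧸ gsub A ((p:ℤ)^i)) m
      = ∑ j ∈ Finset.range m, v (n + j) := by
    show (p:ℤ)^n • ∑ j ∈ Finset.range m, (p:ℤ)^j • ((t (n + j) : ∀ i, A ⧸ gsub A ((p:ℤ)^i)) m)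
      = _
    rw [Finset.smul_sum]
    exact Finset.sum_congr rfl fun x _ => by rw [smul_smul, ← pow_add]
  rw [hL, hR, h1, ← h2, add_sub_cancel_left, Finset.sum_Ico_eq_sum_range]
  simp

end Shift

set_option maxHeartbeats 1000000 in
theorem stmt3_inj (A : Type*) [AddCommGroup A] (p : ℕ) (hp : p.Prime) :
    Function.Injective
      (toComp (↥(gcomp A (fun n : ℕ => (p : ℤ) ^ n))) (fun n : ℕ => (p : ℤ) ^ n)) := by
  set M := ↥(gcomp A (fun n : ℕ => (p : ℤ) ^ n)) with hM
  rw [injective_iff_map_eq_zero]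
  intro x hx
  apply Subtype.ext; funext n
  have h1 : (QuotientAddGroup.mk x : M ⧸ gsub M ((p:ℤ)^n)) = 0 :=
    congrFun (congrArg Subtype.val hx) n
  rw [QuotientAddGroup.eq_zero_iff] at h1
  obtain ⟨y, hy⟩ := h1
  have h2 : ((p:ℤ)^n • (y : ∀ i, A ⧸ gsub A ((p:ℤ)^i)) n : A ⧸ gsub A ((p:ℤ)^n))
      = (x : ∀ i, A ⧸ gsub A ((p:ℤ)^i)) n := congrFun (congrArg Subtype.val hy) n
  have h3 : (x : ∀ i, A ⧸ gsub A ((p:ℤ)^i)) n = 0 := by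
    rw [← h2, zsmul_quot_eq_zero p le_rfl]
  exact h3

set_option maxHeartbeats 1000000 in
theorem stmt3_surj (A : Type*) [AddCommGroup A] (p : ℕ) (hp : p.Prime) :
    Function.Surjective
      (toComp (↥(gcomp A (fun n : ℕ => (p : ℤ) ^ n))) (fun n : ℕ => (p : ℤ) ^ n)) := by
  set M := ↥(gcomp A (fun n : ℕ => (p : ℤ) ^ n)) with hM
  intro ξ
  have hlift : ∀ n : ℕ, ∃ z : M, (QuotientAddGroup.mk z : M ⧸ gsub M ((p:ℤ)^n))
      = (ξ : ∀ i, M ⧸ gsub M ((p:ℤ)^i)) n := fun n => Quot.exists_rep _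
  choose z hz using hlift
  have hdiff : ∀ n : ℕ, ∃ t : M, (p:ℤ)^n • t = z (n+1) - z n := by
    intro n
    have hcomp := ξ.2 n (n+1) (pow_dvd_pow _ (Nat.le_succ n))
    rw [← hz (n+1), ← hz n, QuotientAddGroup.map_mk] at hcomp
    rw [QuotientAddGroup.eq] at hcomp
    obtain ⟨s, hs⟩ := hcomp
    exact ⟨-s, by rw [← zsmulHom_apply, map_neg, hs]; simp only [AddMonoidHom.id_apply]; abel⟩
  choose t ht using hdiff
  have hzn : ∀ n, z n = z 0 + ∑ k ∈ Finset.range n, (p:ℤ)^k • t k := by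
    intro n
    induction n with
    | zero => rw [Finset.range_zero, Finset.sum_empty, add_zero]
    | succ n ih => rw [Finset.sum_range_succ, ← add_assoc, ← ih, ht n]; abel
  refine ⟨z 0 + seriesSum p hp t, Subtype.ext (funext fun n => ?_)⟩
  show (QuotientAddGroup.mk (z 0 + seriesSum p hp t) : M ⧸ gsub M ((p:ℤ)^n)) = _
  rw [← hz n, QuotientAddGroup.eq]
  refine ⟨-(seriesSum p hp (fun j => t (n+j))), ?_⟩
  rw [zsmulHom_apply, smul_neg, ← seriesSum_shift p hp t n, hzn n]
  abel

/-- The `p`-adic completion functor on abelian groups is idempotent: the natural map from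
the `p`-adic completion `Â^p = lim_n A/p^nA` of `A` to the `p`-adic completion of `Â^p`
is an isomorphism. -/
theorem stmt3 (A : Type*) [AddCommGroup A] (p : ℕ) (hp : p.Prime) :
    Function.Bijective
      (toComp (↥(gcomp A (fun n : ℕ => (p : ℤ) ^ n))) (fun n : ℕ => (p : ℤ) ^ n)) :=
  ⟨stmt3_inj A p hp, stmt3_surj A p hp⟩
end

section
/- Let Λ be a complete Noetherian local domain of Krull dimension 2 (e.g. a power series ring R⟦X⟧ over a complete DVR R with residue characteristic p) and let M be a finitely generated torsion Λ-module. Suppose f ∈ Λ generates a height-one prime ideal not dividing the characteristic ideal of M, and let M → E_M = ⊕_{j=1}^s Λ/(g_j^{m_j}) be a pseudo-isomorphism with each g_j generating a height-one prime coprime to (f). Then E_M[f] = 0 and, denoting by M_fin the maximal finite Λ-submodule of M, one has ord_p(|M/fM|) − ord_p(|M_fin|) ≤ ord_p(|E_M/fE_M|) ≤ ord_p(|M/fM|). -/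
open DirectSum

section Helpers

variable {R A B : Type*} [CommRing R] [AddCommGroup A] [Module R A] [AddCommGroup B] [Module R B]

private lemma card_map_mkQ (S T : Submodule R A) :
    Nat.card (S.map T.mkQ) = Nat.card (S ⧸ T.comap S.subtype) := by
  have e := (T.mkQ ∘ₗ S.subtype).quotKerEquivRange
  rw [LinearMap.ker_comp, Submodule.ker_mkQ] at e
  rw [LinearMap.range_comp, Submodule.range_subtype] at e
  exact (Nat.card_congr e.toEquiv).symm

private lemma card_quot_tower {N P : Submodule R A} (h : N ≤ P) :
    Nat.card (A ⧸ N) = Nat.card (P ⧸ N.comap P.subtype) * Nat.card (A ⧸ P) := by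
  rw [← Submodule.card_quotient_mul_card_quotient P N h, card_map_mkQ]

private lemma herbrand_fin [Finite A] (e : A →ₗ[R] A) :
    Nat.card (LinearMap.ker e) = Nat.card (A ⧸ LinearMap.range e) := by
  have h1 := Submodule.card_eq_card_quotient_mul_card (LinearMap.ker e)
  have h2 := Submodule.card_eq_card_quotient_mul_card (LinearMap.range e)
  have h3 : Nat.card (A ⧸ LinearMap.ker e) = Nat.card (LinearMap.range e) :=
    Nat.card_congr e.quotKerEquivRange.toEquiv
  have hpos : 0 < Nat.card (LinearMap.range e) := Nat.card_pos
  rw [h3] at h1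
  rw [mul_comm] at h2
  exact Nat.eq_of_mul_eq_mul_right hpos (h1.symm.trans h2)

private lemma span_smul_top (f : R) :
    Ideal.span {f} • (⊤ : Submodule R A) = LinearMap.range (LinearMap.lsmul R A f) := by
  rw [Submodule.ideal_span_singleton_smul]
  ext x
  constructor
  · intro hx
    obtain ⟨y, -, rfl⟩ := Set.mem_smul_set.mp hx
    exact ⟨y, rfl⟩
  · rintro ⟨y, rfl⟩
    exact Submodule.smul_mem_pointwise_smul y f ⊤ trivial

private lemma key (ψ : A →ₗ[R] B) (f : R)
    (hkψ : Finite (LinearMap.ker ψ)) (hcψ : Finite (B ⧸ LinearMap.range ψ))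
    (hBf : ∀ b : B, f • b = 0 → b = 0)
    (hAfin : Finite (A ⧸ LinearMap.range (LinearMap.lsmul R A f))) :
    Finite (B ⧸ LinearMap.range (LinearMap.lsmul R B f)) ∧
    Nat.card (A ⧸ LinearMap.range (LinearMap.lsmul R A f)) =
      Nat.card (LinearMap.ker (LinearMap.lsmul R A f)) *
        Nat.card (B ⧸ LinearMap.range (LinearMap.lsmul R B f)) := by
  classical
  set u : A →ₗ[R] A := LinearMap.lsmul R A f with hu
  set v : B →ₗ[R] B := LinearMap.lsmul R B f with hv
  set S : Submodule R B := LinearMap.range ψ with hS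
  set T : Submodule R B := LinearMap.range v with hT
  set U : Submodule R A := LinearMap.range u with hU
  set K : Submodule R A := LinearMap.ker ψ with hK
  have hcomm : ∀ a : A, ψ (u a) = v (ψ a) := fun a => ψ.map_smul f a
  have hvinj : Function.Injective v := by
    intro x y hxy
    have h0 : f • (x - y) = 0 := by
      rw [smul_sub, show f • x = v x from rfl, show f • y = v y from rfl, hxy, sub_self]
    exact sub_eq_zero.mp (hBf _ h0)
  set D : Submodule R A := Submodule.comap ψ T with hD
  have hUD : U ≤ D := by
    rintro x ⟨a, rfl⟩
    exact Submodule.mem_comap.mpr ⟨ψ a, (hcomm a).symm⟩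
  have hKD : K ≤ D := by
    intro x hx
    exact Submodule.mem_comap.mpr ⟨0, by rw [map_zero, LinearMap.mem_ker.mp hx]⟩
  have hUKD : U ⊔ K ≤ D := sup_le hUD hKD
  -- the induced endomorphism on the cokernel C = B ⧸ S
  have hle : S ≤ Submodule.comap v S := by
    rintro x ⟨a, rfl⟩
    exact Submodule.mem_comap.mpr ⟨u a, hcomm a⟩
  set vbar : (B ⧸ S) →ₗ[R] (B ⧸ S) := Submodule.mapQ S S v hle with hvbar
  have hvbar_mk : ∀ b : B, vbar (Submodule.Quotient.mk b) = Submodule.Quotient.mk (v b) :=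
    fun b => rfl
  have hrange_vbar : LinearMap.range vbar = Submodule.map S.mkQ T := by
    ext c
    constructor
    · rintro ⟨x, rfl⟩
      obtain ⟨b, rfl⟩ := S.mkQ_surjective x
      exact Submodule.mem_map.mpr ⟨v b, ⟨b, rfl⟩, (hvbar_mk b).symm⟩
    · rintro ⟨t, ⟨b, rfl⟩, rfl⟩
      exact ⟨Submodule.Quotient.mk b, hvbar_mk b⟩
  haveI : Finite (B ⧸ S) := hcψ
  haveI : Finite K := hkψ
  have hF6 : Nat.card (LinearMap.ker vbar) = Nat.card ((B ⧸ S) ⧸ LinearMap.range vbar) :=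
    herbrand_fin vbar
  -- A ⧸ D ≃ image of S in B ⧸ T
  have hF4 : Nat.card (A ⧸ D) = Nat.card (Submodule.map T.mkQ S) := by
    have e := (T.mkQ ∘ₗ ψ).quotKerEquivRange
    rw [LinearMap.ker_comp, Submodule.ker_mkQ, LinearMap.range_comp] at e
    exact Nat.card_congr e.toEquiv
  have hF5 : Nat.card (B ⧸ T) =
      Nat.card (Submodule.map T.mkQ S) * Nat.card ((B ⧸ T) ⧸ Submodule.map T.mkQ S) :=
    Submodule.card_eq_card_quotient_mul_card _
  have hF5b : Nat.card ((B ⧸ T) ⧸ Submodule.map T.mkQ S) =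
      Nat.card ((B ⧸ S) ⧸ LinearMap.range vbar) := by
    rw [hrange_vbar]
    have e1 := Submodule.quotientQuotientEquivQuotientSup T S
    have e2 := Submodule.quotientQuotientEquivQuotientSup S T
    rw [Nat.card_congr e1.toEquiv, Nat.card_congr e2.toEquiv, sup_comm]
  -- the map τ : D → B ⧸ S hitting the kernel of vbar
  set eT : B ≃ₗ[R] T := LinearEquiv.ofInjective v hvinj with heT
  have heT_coe : ∀ b : B, ((eT b : T) : B) = v b := fun b => rfl
  set ρ : D →ₗ[R] T :=
    LinearMap.codRestrict T (ψ ∘ₗ D.subtype) (fun d => Submodule.mem_comap.mp d.2) with hρ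
  have hρ_coe : ∀ d : D, ((ρ d : T) : B) = ψ (d : A) := fun d => rfl
  set τ : D →ₗ[R] (B ⧸ S) := S.mkQ ∘ₗ (eT.symm : T →ₗ[R] B) ∘ₗ ρ with hτdef
  have hτ : ∀ (d : D) (b : B), v b = ψ (d : A) → τ d = Submodule.Quotient.mk b := by
    intro d b hb
    have h1 : ρ d = eT b := by
      apply Subtype.ext
      rw [hρ_coe, heT_coe, hb]
    simp only [hτdef, LinearMap.coe_comp, Function.comp_apply, LinearEquiv.coe_coe, h1,
      LinearEquiv.symm_apply_apply, Submodule.mkQ_apply]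
  have hbd : ∀ d : D, v ((eT.symm (ρ d) : B)) = ψ (d : A) := by
    intro d
    have := heT_coe (eT.symm (ρ d))
    rw [LinearEquiv.apply_symm_apply] at this
    rw [← this, hρ_coe]
  have hker_τ : LinearMap.ker τ = Submodule.comap D.subtype (U ⊔ K) := by
    ext d
    simp only [LinearMap.mem_ker, Submodule.mem_comap, Submodule.coe_subtype]
    constructor
    · intro h
      set b : B := (eT.symm (ρ d) : B) with hbdef
      have hτd : τ d = Submodule.Quotient.mk b := hτ d b (hbd d)
      rw [hτd] at h
      have hbS : b ∈ S := (Submodule.Quotient.mk_eq_zero S).mp h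
      obtain ⟨a, ha⟩ := hbS
      have hsub : ψ ((d : A) - u a) = 0 := by
        rw [map_sub, hcomm, ha, hbd d, sub_self]
      have : (d : A) = u a + ((d : A) - u a) := by abel
      rw [this]
      exact Submodule.add_mem_sup ⟨a, rfl⟩ (LinearMap.mem_ker.mpr hsub)
    · intro hmem
      obtain ⟨x, hx, y, hy, hxy⟩ := Submodule.mem_sup.mp hmem
      obtain ⟨a, rfl⟩ := hx
      have hψd : v (ψ a) = ψ (d : A) := by
        rw [← hxy, map_add, LinearMap.mem_ker.mp hy, add_zero, hcomm]
      rw [hτ d (ψ a) hψd]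
      exact (Submodule.Quotient.mk_eq_zero S).mpr ⟨a, rfl⟩
  have hrange_τ : LinearMap.range τ = LinearMap.ker vbar := by
    ext c
    constructor
    · rintro ⟨d, rfl⟩
      rw [hτ d _ (hbd d)]
      rw [LinearMap.mem_ker, hvbar_mk, hbd d]
      exact (Submodule.Quotient.mk_eq_zero S).mpr ⟨d, rfl⟩
    · intro hc
      obtain ⟨b, rfl⟩ := S.mkQ_surjective c
      have h0 : Submodule.Quotient.mk (v b) = (0 : B ⧸ S) := by
        rw [← hvbar_mk]; exact LinearMap.mem_ker.mp hc
      have hvbS : v b ∈ S := (Submodule.Quotient.mk_eq_zero S).mp h0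
      obtain ⟨d0, hd0⟩ := hvbS
      have hd0D : d0 ∈ D := Submodule.mem_comap.mpr ⟨b, hd0.symm⟩
      exact ⟨⟨d0, hd0D⟩, hτ ⟨d0, hd0D⟩ b hd0.symm⟩
  have hF7 : Nat.card (LinearMap.ker vbar) =
      Nat.card (D ⧸ (U ⊔ K).comap D.subtype) := by
    have e := τ.quotKerEquivRange
    rw [hker_τ, hrange_τ] at e
    exact (Nat.card_congr e.toEquiv).symm
  -- towers
  have hT1 : Nat.card (A ⧸ U) =
      Nat.card ((↥(U ⊔ K)) ⧸ U.comap (U ⊔ K).subtype) * Nat.card (A ⧸ (U ⊔ K)) :=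
    card_quot_tower le_sup_left
  have hT2 : Nat.card (A ⧸ (U ⊔ K)) =
      Nat.card (D ⧸ (U ⊔ K).comap D.subtype) * Nat.card (A ⧸ D) :=
    card_quot_tower hUKD
  -- second isomorphism theorem piece
  have h10a : Nat.card ((↥(U ⊔ K)) ⧸ U.comap (U ⊔ K).subtype) =
      Nat.card (K ⧸ (K ⊓ U).comap K.subtype) := by
    rw [sup_comm U K]
    exact (Nat.card_congr (LinearMap.quotientInfEquivSupQuotient K U).toEquiv).symm
  -- restrict u to K
  have humem : ∀ x ∈ K, u x ∈ K := by
    intro x hx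
    have : ψ (u x) = 0 := by rw [hcomm, LinearMap.mem_ker.mp hx, map_zero]
    exact LinearMap.mem_ker.mpr this
  set u' : K →ₗ[R] K := u.restrict humem with hu'
  have hu'_coe : ∀ x : K, ((u' x : K) : A) = u (x : A) := fun x => rfl
  have h10b : (K ⊓ U).comap K.subtype = LinearMap.range u' := by
    ext x
    simp only [Submodule.mem_comap, Submodule.mem_inf, LinearMap.mem_range,
      Submodule.coe_subtype]
    constructor
    · rintro ⟨-, a, ha⟩
      have haK : a ∈ K := by
        have h1 : v (ψ a) = 0 := by
          rw [← hcomm, ha, LinearMap.mem_ker.mp x.2]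
        have h2 : ψ a = 0 := hvinj (by rw [h1, map_zero])
        exact LinearMap.mem_ker.mpr h2
      refine ⟨⟨a, haK⟩, ?_⟩
      apply Subtype.ext
      rw [hu'_coe]
      exact ha
    · rintro ⟨a, rfl⟩
      exact ⟨(u' a).2, ⟨(a : A), (hu'_coe a).symm⟩⟩
  have h10c : Nat.card (LinearMap.ker u') = Nat.card (K ⧸ LinearMap.range u') :=
    herbrand_fin u'
  have hKerU_K : LinearMap.ker u ≤ K := by
    intro x hx
    have h1 : v (ψ x) = 0 := by rw [← hcomm, LinearMap.mem_ker.mp hx, map_zero]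
    exact LinearMap.mem_ker.mpr (hvinj (by rw [h1, map_zero]))
  have h10d : LinearMap.ker u' = (LinearMap.ker u).comap K.subtype := by
    ext x
    simp only [LinearMap.mem_ker, Submodule.mem_comap, Submodule.coe_subtype]
    constructor
    · intro h
      have := congrArg (Subtype.val) h
      rw [hu'_coe] at this
      exact this
    · intro h
      apply Subtype.ext
      rw [hu'_coe]
      exact h
  have h10e : Nat.card ((LinearMap.ker u).comap K.subtype) = Nat.card (LinearMap.ker u) :=
    Nat.card_congr (Submodule.comapSubtypeEquivOfLe hKerU_K).toEquiv
  have h10 : Nat.card ((↥(U ⊔ K)) ⧸ U.comap (U ⊔ K).subtype) = Nat.card (LinearMap.ker u) := by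
    rw [h10a, ← h10e, ← h10d, h10c, h10b]
  -- assemble the two counts
  have hAcount : Nat.card (A ⧸ U) =
      Nat.card (LinearMap.ker u) *
        (Nat.card (LinearMap.ker vbar) * Nat.card (A ⧸ D)) := by
    rw [hT1, hT2, h10, hF7]
  have hBcount : Nat.card (B ⧸ T) =
      Nat.card (LinearMap.ker vbar) * Nat.card (A ⧸ D) := by
    rw [hF5, hF5b, ← hF6, ← hF4, mul_comm]
  -- finiteness of B ⧸ T
  have hsurjAD : Function.Surjective (Submodule.mapQ U D LinearMap.id (by simpa using hUD)) := by
    intro c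
    obtain ⟨a, rfl⟩ := D.mkQ_surjective c
    exact ⟨Submodule.Quotient.mk a, rfl⟩
  haveI finAD : Finite (A ⧸ D) := Finite.of_surjective _ hsurjAD
  haveI finKV : Finite (LinearMap.ker vbar) := Subtype.finite
  have hpos : 0 < Nat.card (B ⧸ T) := by
    rw [hBcount]
    exact Nat.mul_pos Nat.card_pos Nat.card_pos
  have hfinBT : Finite (B ⧸ T) := (Nat.card_pos_iff.mp hpos).2
  refine ⟨hfinBT, ?_⟩
  rw [hAcount, hBcount]

end Helpers

/-- Let `Λ` be a complete Noetherian local domain of Krull dimension 2 with residue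
characteristic `p`, and `M` a finitely generated torsion `Λ`-module with a
pseudo-isomorphism `φ : M → E_M = ⊕_j Λ/(g_j^{m_j})` in which each `(g_j)` is a prime
coprime to a nonzero prime element `f` not dividing the characteristic ideal of `M`, and
with `M/fM` finite. Then `E_M[f] = 0` and, writing `M_fin` for the maximal finite
`Λ`-submodule of `M`,
`ord_p(|M/fM|) − ord_p(|M_fin|) ≤ ord_p(|E_M/fE_M|) ≤ ord_p(|M/fM|)`. -/
theorem stmt9 (Λ : Type*) [CommRing Λ] [IsDomain Λ] [IsNoetherianRing Λ] [IsLocalRing Λ]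
    [IsAdicComplete (IsLocalRing.maximalIdeal Λ) Λ]
    (hdim : ringKrullDim Λ = 2)
    (p : ℕ) (hp : p.Prime) (hpΛ : (p : Λ) ∈ IsLocalRing.maximalIdeal Λ)
    (M : Type*) [AddCommGroup M] [Module Λ M] [Module.Finite Λ M]
    (htor : Module.IsTorsion Λ M)
    (s : ℕ) (g : Fin s → Λ) (m : Fin s → ℕ)
    (hgprime : ∀ j, (Ideal.span {g j}).IsPrime) (hg0 : ∀ j, g j ≠ 0)
    (f : Λ) (hf0 : f ≠ 0) (hfprime : (Ideal.span {f}).IsPrime)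
    (hcop : ∀ j, f ∉ Ideal.span {g j})
    (φ : M →ₗ[Λ] (⨁ j : Fin s, Λ ⧸ Ideal.span {g j ^ m j}))
    (hker : Finite (LinearMap.ker φ))
    (hcoker : Finite ((⨁ j : Fin s, Λ ⧸ Ideal.span {g j ^ m j}) ⧸ LinearMap.range φ))
    (hMf : Finite (M ⧸ (Ideal.span {f} • (⊤ : Submodule Λ M))))
    (Mfin : Submodule Λ M) (hMfinF : Finite Mfin)
    (hMfinMax : ∀ N : Submodule Λ M, Finite N → N ≤ Mfin) :
    (∀ x : (⨁ j : Fin s, Λ ⧸ Ideal.span {g j ^ m j}), f • x = 0 → x = 0) ∧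
    (padicValNat p (Nat.card (M ⧸ (Ideal.span {f} • (⊤ : Submodule Λ M)))) -
        padicValNat p (Nat.card Mfin) ≤
      padicValNat p (Nat.card ((⨁ j : Fin s, Λ ⧸ Ideal.span {g j ^ m j}) ⧸
        (Ideal.span {f} •
          (⊤ : Submodule Λ (⨁ j : Fin s, Λ ⧸ Ideal.span {g j ^ m j})))))) ∧
    (padicValNat p (Nat.card ((⨁ j : Fin s, Λ ⧸ Ideal.span {g j ^ m j}) ⧸
        (Ideal.span {f} •
          (⊤ : Submodule Λ (⨁ j : Fin s, Λ ⧸ Ideal.span {g j ^ m j}))))) ≤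
      padicValNat p (Nat.card (M ⧸ (Ideal.span {f} • (⊤ : Submodule Λ M))))) := by
  classical
  haveI : Fact p.Prime := ⟨hp⟩
  -- torsion-freeness of E at f
  have hgp : ∀ j, Prime (g j) := fun j => (Ideal.span_singleton_prime (hg0 j)).mp (hgprime j)
  have hnd : ∀ j, ¬ g j ∣ f := fun j h => hcop j (Ideal.mem_span_singleton.mpr h)
  have hcomp : ∀ (j : Fin s) (y : Λ ⧸ Ideal.span {g j ^ m j}), f • y = 0 → y = 0 := by
    intro j y hy
    obtain ⟨a, rfl⟩ := (Ideal.span {g j ^ m j}).mkQ_surjective y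
    rw [Submodule.mkQ_apply, ← Submodule.Quotient.mk_smul, Submodule.Quotient.mk_eq_zero] at hy
    rw [Submodule.mkQ_apply, Submodule.Quotient.mk_eq_zero]
    rw [Ideal.mem_span_singleton] at hy ⊢
    have : f • a = f * a := rfl
    rw [this] at hy
    exact (hgp j).pow_dvd_of_dvd_mul_left (m j) (hnd j) hy
  have hBf : ∀ x : (⨁ j : Fin s, Λ ⧸ Ideal.span {g j ^ m j}), f • x = 0 → x = 0 := by
    intro x hx
    apply DFinsupp.ext (fun j => ?_)
    have h1 : (f • x) j = 0 := by rw [hx]; rfl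
    rw [DirectSum.smul_apply] at h1
    exact hcomp j (x j) h1
  refine ⟨hBf, ?_⟩
  set E := (⨁ j : Fin s, Λ ⧸ Ideal.span {g j ^ m j}) with hE
  -- rewrite smul-top submodules as ranges
  rw [span_smul_top (A := M) f, span_smul_top (A := E) f]
  rw [span_smul_top (A := M) f] at hMf
  obtain ⟨hfinE, hcard⟩ := key φ f hker hcoker hBf hMf
  -- the f-torsion of M is finite and contained in Mfin
  set KU : Submodule Λ M := LinearMap.ker (LinearMap.lsmul Λ M f) with hKU
  have hKUle : KU ≤ LinearMap.ker φ := by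
    intro x hx
    have h1 : f • φ x = 0 := by
      rw [← map_smul]
      rw [show f • x = LinearMap.lsmul Λ M f x from rfl, LinearMap.mem_ker.mp hx, map_zero]
    exact LinearMap.mem_ker.mpr (hBf _ h1)
  haveI hKUfin : Finite KU :=
    Finite.of_injective _ (Submodule.inclusion_injective hKUle)
  have hKUMfin : KU ≤ Mfin := hMfinMax KU hKUfin
  have hdvd : Nat.card KU ∣ Nat.card Mfin := by
    have e := Submodule.comapSubtypeEquivOfLe hKUMfin
    have h1 : Nat.card KU = Nat.card (KU.comap Mfin.subtype) := (Nat.card_congr e.toEquiv).symm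
    have h2 := Submodule.card_eq_card_quotient_mul_card (KU.comap Mfin.subtype)
    exact ⟨Nat.card (Mfin ⧸ KU.comap Mfin.subtype), by rw [h1, h2, mul_comm]⟩
  -- numerics
  haveI : Finite (M ⧸ LinearMap.range (LinearMap.lsmul Λ M f)) := hMf
  have hMfin0 : Nat.card Mfin ≠ 0 := Nat.card_pos.ne'
  have hKU0 : Nat.card KU ≠ 0 := Nat.card_pos.ne'
  have hE0 : Nat.card (E ⧸ LinearMap.range (LinearMap.lsmul Λ E f)) ≠ 0 := by
    haveI := hfinE
    exact Nat.card_pos.ne'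
  have hval : padicValNat p (Nat.card (M ⧸ LinearMap.range (LinearMap.lsmul Λ M f))) =
      padicValNat p (Nat.card KU) +
        padicValNat p (Nat.card (E ⧸ LinearMap.range (LinearMap.lsmul Λ E f))) := by
    rw [hcard]
    exact padicValNat.mul hKU0 hE0
  have hvle : padicValNat p (Nat.card KU) ≤ padicValNat p (Nat.card Mfin) := by
    rw [← padicValNat_dvd_iff_le hMfin0]
    exact dvd_trans pow_padicValNat_dvd hdvd
  have goal1 : padicValNat p (Nat.card (M ⧸ LinearMap.range (LinearMap.lsmul Λ M f))) -
      padicValNat p (Nat.card Mfin) ≤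
      padicValNat p (Nat.card (E ⧸ LinearMap.range (LinearMap.lsmul Λ E f))) := by omega
  have goal2 : padicValNat p (Nat.card (E ⧸ LinearMap.range (LinearMap.lsmul Λ E f))) ≤
      padicValNat p (Nat.card (M ⧸ LinearMap.range (LinearMap.lsmul Λ M f))) := by omega
  exact ⟨goal1, goal2⟩
end

section
/- Let (Q_E, ρ_{F/E}) be an inverse system, indexed by a directed set, of finitely generated torsion-free modules over ℤ localized away from a finite set of primes, and set Q = lim_E Q_E. Then the sequence 0 → Q → Q̂ → ∏_E (ℚ ⊗ Q̂_E)/(ℚ ⊗ Q_E) is exact, where Q̂ denotes the profinite completion lim_n Q/nQ and the right-hand map is induced by the natural maps Q̂ → Q̂_E. -/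
open scoped TensorProduct

lemma map_map_comm {A B : Type*} [AddCommGroup A] [AddCommGroup B] (f : A →+ B)
    {c d : ℤ} (h : c ∣ d) (q : A ⧸ gsub A d) :
    QuotientAddGroup.map (gsub B d) (gsub B c) (AddMonoidHom.id B)
        (gsub_le_comap (AddMonoidHom.id B) h)
        (QuotientAddGroup.map (gsub A d) (gsub B d) f (gsub_le_comap f dvd_rfl) q) =
      QuotientAddGroup.map (gsub A c) (gsub B c) f (gsub_le_comap f dvd_rfl)
        (QuotientAddGroup.map (gsub A d) (gsub A c) (AddMonoidHom.id A)
          (gsub_le_comap (AddMonoidHom.id A) h) q) := by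
  induction q using QuotientAddGroup.induction_on with
  | H a => simp [QuotientAddGroup.map_mk]

/-- The functorial map on completions induced by a homomorphism `f : A → B`. -/
def compMap {A B : Type*} [AddCommGroup A] [AddCommGroup B] (f : A →+ B) {ι : Type*}
    (N : ι → ℤ) : gcomp A N →+ gcomp B N where
  toFun x := ⟨fun i =>
    QuotientAddGroup.map (gsub A (N i)) (gsub B (N i)) f (gsub_le_comap f dvd_rfl) (x.1 i), by
      intro i j h
      show QuotientAddGroup.map _ _ _ _
          (QuotientAddGroup.map _ _ f (gsub_le_comap f dvd_rfl) (x.1 j)) = _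
      rw [map_map_comm f h (x.1 j), x.2 i j h]⟩
  map_zero' := Subtype.ext (funext fun i => map_zero _)
  map_add' x y := Subtype.ext (funext fun i => map_add _ _ _)

/-- The inverse limit of a projective system of abelian groups, as the subgroup of
compatible families. -/
def limSub {ι : Type*} [Preorder ι] (Q : ι → Type*) [∀ i, AddCommGroup (Q i)]
    (ρ : ∀ i j, i ≤ j → (Q j →+ Q i)) : AddSubgroup (∀ i, Q i) where
  carrier := {x | ∀ (i j : ι) (h : i ≤ j), ρ i j h (x j) = x i}
  add_mem' := by
    intro x y hx hy i j h
    simp only [Pi.add_apply, map_add]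
    rw [hx i j h, hy i j h]
  zero_mem' := by intro i j h; simp
  neg_mem' := by
    intro x hx i j h
    simp only [Pi.neg_apply, map_neg]
    rw [hx i j h]

/-- The family of positive integers, ordered by divisibility, along which profinite
completions are formed. -/
def NN : ℕ+ → ℤ := fun n => (n : ℤ)

/-- The natural map `C → ℚ ⊗_ℤ C`. -/
noncomputable def ratEmb (C : Type*) [AddCommGroup C] : C →ₗ[ℤ] ℚ ⊗[ℤ] C :=
  TensorProduct.mk ℤ ℚ C 1

/-- The image of `ℚ ⊗ A` in `ℚ ⊗ Â` under the natural map induced by `A → Â`. -/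
noncomputable def WW (A : Type*) [AddCommGroup A] : Submodule ℤ (ℚ ⊗[ℤ] ↥(gcomp A NN)) :=
  LinearMap.range (LinearMap.lTensor ℚ (toComp A NN).toIntLinearMap)

/-!
Over the Noetherian domain `ℤ_S`, which is not a field, Krull's intersection theorem gives
`⋂ₙ n Q_E = 0`, so every `Q_E` embeds in its completion, and hence so does `Q = lim Q_E`.

For exactness in the middle, let `m ∈ Q̂` have image in `ℚ ⊗ Q_E` inside each `ℚ ⊗ Q̂_E`. Then a
nonzero multiple of its component `m_E ∈ Q̂_E` lies in `Q_E`; as `Q̂_E / Q_E` is torsion-free for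
torsion-free `Q_E`, already `m_E = x_E ∈ Q_E`. The `x_E` are compatible because `Q_E → Q̂_E` is
injective, and `(x_E)` represents `m` because, by uniqueness of division by `n` in torsion-free
groups, an element of `Q` is divisible by `n` as soon as all its components are.
-/

section Completion

variable {A B C : Type*} [AddCommGroup A] [AddCommGroup B] [AddCommGroup C] {ι : Type*}
  {N : ι → ℤ}

lemma gsub_quotient_zsmul_eq_zero {c d : ℤ} (h : c ∣ d) (q : A ⧸ gsub A c) : d • q = 0 := by
  induction q using QuotientAddGroup.induction_on with
  | H a =>
    rw [← QuotientAddGroup.mk_zsmul, QuotientAddGroup.eq_zero_iff]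
    exact gsub_le_comap (AddMonoidHom.id A) h ⟨a, rfl⟩

lemma toComp_eq_zero_iff {a : A} : toComp A N a = 0 ↔ ∀ i, a ∈ gsub A (N i) :=
  ⟨fun h i => (QuotientAddGroup.eq_zero_iff a).1 (congrFun (congrArg Subtype.val h) i),
    fun h => Subtype.ext (funext fun i => (QuotientAddGroup.eq_zero_iff a).2 (h i))⟩

lemma compMap_toComp (f : A →+ B) (a : A) :
    compMap f N (toComp A N a) = toComp B N (f a) :=
  Subtype.ext (funext fun _ => QuotientAddGroup.map_mk _ _ _ _ _)

lemma compMap_comp (f : B →+ C) (g : A →+ B) (x : gcomp A N) :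
    compMap (f.comp g) N x = compMap f N (compMap g N x) := by
  refine Subtype.ext (funext fun i => ?_)
  obtain ⟨a, ha⟩ := QuotientAddGroup.mk_surjective ((x : ∀ i, A ⧸ gsub A (N i)) i)
  change QuotientAddGroup.map _ _ _ _ _ =
    QuotientAddGroup.map _ _ _ _ (QuotientAddGroup.map _ _ _ _ _)
  rw [← ha]
  rfl

lemma NN_ne_zero (n : ℕ+) : NN n ≠ 0 := by
  simp [NN]

-- `w m` is the image of `w (n * m) = [u]`, and `n • u ∈ n m A` forces `u ∈ m A`.
lemma gcomp_eq_zero_of_nsmul_eq_zero [IsAddTorsionFree A] {n : ℕ} (hn : n ≠ 0) {w : gcomp A NN}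
    (hw : n • w = 0) : w = 0 := by
  refine Subtype.ext (funext fun m => ?_)
  set k : ℕ+ := n.toPNat (Nat.pos_of_ne_zero hn) * m
  have hk : NN k = n * NN m := by simp only [k, NN, PNat.mul_coe, Nat.cast_mul]; rfl
  obtain ⟨u, hu⟩ := QuotientAddGroup.mk_surjective ((w : ∀ m, A ⧸ gsub A (NN m)) k)
  obtain ⟨v, hv⟩ : (n : ℤ) • u ∈ gsub A (NN k) := by
    rw [← QuotientAddGroup.eq_zero_iff, QuotientAddGroup.mk_zsmul, hu, natCast_zsmul]
    exact congrFun (congrArg Subtype.val hw) k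
  have huv : u = NN m • v := zsmul_right_injective (Int.natCast_ne_zero.2 hn) <| by
    simp only [← hv, zsmulHom_apply, hk, mul_smul]
  rw [← w.2 m k (Dvd.intro_left _ hk.symm), ← hu, QuotientAddGroup.map_mk]
  exact (QuotientAddGroup.eq_zero_iff u).2 ⟨v, huv.symm⟩

instance [IsAddTorsionFree A] : IsAddTorsionFree (gcomp A NN) :=
  ⟨fun _ hn _ _ h => sub_eq_zero.1 <|
    gcomp_eq_zero_of_nsmul_eq_zero hn (by rw [nsmul_sub, sub_eq_zero]; exact h)⟩

lemma mem_range_toComp_of_zsmul_mem [IsAddTorsionFree A] {x : gcomp A NN} {d : ℤ} (hd : d ≠ 0)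
    (hx : d • x ∈ (toComp A NN).range) : x ∈ (toComp A NN).range := by
  obtain ⟨a, ha⟩ := hx
  -- the `|d|`-th component of `d • x` vanishes, so `a ∈ |d| A = d A`
  have hae : a ∈ gsub A (NN ⟨d.natAbs, Int.natAbs_pos.2 hd⟩) := by
    rw [← QuotientAddGroup.eq_zero_iff]
    exact (congrFun (congrArg Subtype.val ha) _).trans
      (gsub_quotient_zsmul_eq_zero (Int.natAbs_dvd.2 dvd_rfl) _)
  obtain ⟨c, rfl⟩ := gsub_le_comap (AddMonoidHom.id A) (Int.dvd_natAbs.2 dvd_rfl) hae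
  exact ⟨c, zsmul_right_injective hd (by simpa using ha)⟩

end Completion

section Rationalization

variable {A B : Type*} [AddCommGroup A] [AddCommGroup B]

instance : IsLocalizedModule (nonZeroDivisors ℤ) (ratEmb A) :=
  IsLocalization.tensorProduct_isLocalizedModule (S := nonZeroDivisors ℤ) ℚ

lemma ratEmb_injective [IsAddTorsionFree A] : Function.Injective (ratEmb A) := by
  rw [← LinearMap.ker_eq_bot, eq_bot_iff]
  intro z hz
  obtain ⟨s, hs⟩ := (IsLocalizedModule.eq_zero_iff (nonZeroDivisors ℤ) (ratEmb A)).1 hz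
  exact (smul_eq_zero_iff_right (nonZeroDivisors.coe_ne_zero s)).1 hs

lemma lTensor_ratEmb (g : A →+ B) (a : A) :
    LinearMap.lTensor ℚ g.toIntLinearMap (ratEmb A a) = ratEmb B (g a) :=
  LinearMap.lTensor_tmul _ _ _ _

lemma ratEmb_mem_WW_iff [IsAddTorsionFree A] (x : gcomp A NN) :
    ratEmb _ x ∈ WW A ↔ x ∈ (toComp A NN).range := by
  constructor
  · rintro ⟨t, ht⟩
    change LinearMap.lTensor ℚ (toComp A NN).toIntLinearMap t = ratEmb _ x at ht
    obtain ⟨⟨z, s⟩, hs⟩ := IsLocalizedModule.surj (nonZeroDivisors ℤ) (ratEmb A) t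
    refine mem_range_toComp_of_zsmul_mem (nonZeroDivisors.coe_ne_zero s) ⟨z, ratEmb_injective ?_⟩
    rw [← lTensor_ratEmb, ← hs, Submonoid.smul_def, map_smul, ht, map_smul]
  · rintro ⟨a, rfl⟩
    exact ⟨ratEmb A a, lTensor_ratEmb _ _⟩

end Rationalization

section Limit

variable {ι : Type*} [Preorder ι] {Q : ι → Type*} [∀ i, AddCommGroup (Q i)]
  (ρ : ∀ i j, i ≤ j → (Q j →+ Q i))

def limProj (i : ι) : limSub Q ρ →+ Q i := (Pi.evalAddMonoidHom Q i).comp (limSub Q ρ).subtype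

lemma toComp_limSub_injective {κ : Type*} {N : κ → ℤ}
    (hinj : ∀ i, Function.Injective (toComp (Q i) N)) :
    Function.Injective (toComp (limSub Q ρ) N) := by
  refine (injective_iff_map_eq_zero _).2 fun q hq => Subtype.ext (funext fun i => ?_)
  refine (injective_iff_map_eq_zero _).1 (hinj i) _ (toComp_eq_zero_iff.2 fun k => ?_)
  obtain ⟨y, hy⟩ := toComp_eq_zero_iff.1 hq k
  exact ⟨(y : ∀ i, Q i) i, congrFun (congrArg Subtype.val hy) i⟩

lemma mem_gsub_limSub [∀ i, IsAddTorsionFree (Q i)] {n : ℤ} (hn : n ≠ 0) (q : limSub Q ρ)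
    (hq : ∀ i, (q : ∀ i, Q i) i ∈ gsub (Q i) n) : q ∈ gsub (limSub Q ρ) n := by
  choose z hz using hq
  simp only [zsmulHom_apply] at hz
  have hz_mem : z ∈ limSub Q ρ := fun i j h =>
    zsmul_right_injective hn (by dsimp only; rw [← map_zsmul, hz, hz, q.2 i j h])
  exact ⟨⟨z, hz_mem⟩, Subtype.ext (funext hz)⟩

lemma mem_range_toComp_limSub_iff [∀ i, IsAddTorsionFree (Q i)]
    (hinj : ∀ i, Function.Injective (toComp (Q i) NN)) (x : gcomp (limSub Q ρ) NN) :
    x ∈ (toComp (limSub Q ρ) NN).range ↔ ∀ i,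
      compMap (limProj ρ i) NN x ∈ (toComp (Q i) NN).range := by
  constructor
  · rintro ⟨q, rfl⟩ i
    exact ⟨_, (compMap_toComp _ q).symm⟩
  · intro hx
    choose b hb using hx
    have hb_mem : b ∈ limSub Q ρ := fun i j h => hinj i (by
      have hπ : (ρ i j h).comp (limProj ρ j) = limProj ρ i := AddMonoidHom.ext fun q => q.2 i j h
      rw [← compMap_toComp, hb, ← compMap_comp, hπ, hb])
    refine ⟨⟨b, hb_mem⟩, Subtype.ext (funext fun n => ?_)⟩
    obtain ⟨y, hy⟩ :=
      QuotientAddGroup.mk_surjective ((x : ∀ n, limSub Q ρ ⧸ gsub (limSub Q ρ) (NN n)) n)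
    rw [← hy]
    refine QuotientAddGroup.eq.2 (mem_gsub_limSub ρ (NN_ne_zero n) _ fun i => ?_)
    have hbi := congrFun (congrArg Subtype.val (hb i)) n
    change _ = QuotientAddGroup.map _ _ _ _ _ at hbi
    rw [← hy, QuotientAddGroup.map_mk] at hbi
    exact QuotientAddGroup.eq.1 hbi

end Limit

lemma Module.isTorsionFree_of_subring_rat (R : Subring ℚ) (M : Type*) [AddCommGroup M]
    [Module R M] [IsAddTorsionFree M] : Module.IsTorsionFree R M := by
  refine .of_smul_eq_zero fun r m h => ?_
  have hnum : (((r : ℚ).num : ℤ) : R) = ((r : ℚ).den : R) * r :=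
    Subtype.ext (by push_cast; exact (Rat.den_mul_eq_num _).symm)
  have : (r : ℚ).num • m = 0 := by
    rw [← Int.cast_smul_eq_zsmul R, hnum, mul_smul, h, smul_zero]
  rcases smul_eq_zero.1 this with h | h
  · exact .inl (Subtype.ext (Rat.num_eq_zero.1 h))
  · exact .inr h

lemma eq_zero_of_forall_mem_gsub_pow {R M : Type*} [CommRing R] [IsDomain R] [IsNoetherianRing R]
    [AddCommGroup M] [Module R M] [Module.Finite R M] [Module.IsTorsionFree R M] {n : ℤ}
    (hn : ¬IsUnit (n : R)) {a : M} (ha : ∀ k : ℕ, a ∈ gsub M (n ^ k)) : a = 0 := by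
  have hI : Ideal.span {(n : R)} ≠ ⊤ := by rwa [Ne, Ideal.span_singleton_eq_top]
  rw [← Submodule.mem_bot R, ← Ideal.iInf_pow_smul_eq_bot_of_isTorsionFree _ hI,
    Submodule.mem_iInf]
  intro k
  obtain ⟨y, rfl⟩ := ha k
  rw [Ideal.span_singleton_pow, zsmulHom_apply, ← Int.cast_smul_eq_zsmul R]
  push_cast
  exact Submodule.smul_mem_smul (Ideal.mem_span_singleton_self _) Submodule.mem_top

lemma Subring.exists_natCast_not_isUnit {R : Subring ℚ} (hR : R ≠ ⊤) :
    ∃ n : ℕ, 0 < n ∧ ¬IsUnit (n : R) := by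
  by_contra! h
  refine hR (eq_top_iff.2 fun q _ => ?_)
  obtain ⟨u, hu⟩ := h q.den q.den_pos
  have hinv : ((u⁻¹ : Rˣ) : ℚ) = (q.den : ℚ)⁻¹ := by
    refine eq_inv_of_mul_eq_one_left ?_
    have := congrArg (fun r : R => (r : ℚ)) u.inv_mul
    push_cast [hu] at this
    exact this
  rw [← Rat.num_div_den q, div_eq_mul_inv, ← hinv]
  exact R.mul_mem (intCast_mem R _) (u⁻¹ : Rˣ).1.2

lemma toComp_injective_of_subring_rat {R : Subring ℚ} [IsNoetherianRing R] (hR : R ≠ ⊤)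
    (M : Type*) [AddCommGroup M] [IsAddTorsionFree M] [Module R M] [Module.Finite R M] :
    Function.Injective (toComp M NN) := by
  have := Module.isTorsionFree_of_subring_rat R M
  obtain ⟨n, hn, hnR⟩ := Subring.exists_natCast_not_isUnit hR
  refine (injective_iff_map_eq_zero _).2 fun a ha => ?_
  exact eq_zero_of_forall_mem_gsub_pow (n := n) (by exact_mod_cast hnR) fun k =>
    (by simpa [NN] using toComp_eq_zero_iff.1 ha ⟨n ^ k, pow_pos hn k⟩)

-- For a prime `p` beyond `S`, the closure consists of `p`-adic integers, and `1 / p` is not one.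
lemma closure_inv_natCast_ne_top (S : Finset ℕ) :
    Subring.closure ((fun p : ℕ => (p : ℚ)⁻¹) '' S) ≠ ⊤ := by
  obtain ⟨p, hpS, hp⟩ := Nat.exists_infinite_primes (S.sup id + 1)
  have := Fact.mk hp
  have hle : Subring.closure ((fun p : ℕ => (p : ℚ)⁻¹) '' S) ≤
      (PadicInt.subring p).comap (Rat.castHom ℚ_[p]) := by
    rw [Subring.closure_le]
    rintro _ ⟨s, hs, rfl⟩
    rcases Nat.eq_zero_or_pos s with rfl | hs0
    · simp
    have hps : ‖(s : ℚ_[p])‖ = 1 := Padic.norm_natCast_eq_one_iff.2 <|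
      (Nat.Prime.coprime_iff_not_dvd hp).2 <| Nat.not_dvd_of_pos_of_lt hs0 <| by
        have := Finset.le_sup (f := id) hs
        simp at this
        omega
    simp [hps]
  intro htop
  have := hle (htop ▸ Subring.mem_top ((p : ℚ)⁻¹))
  simp [Padic.norm_p] at this
  exact absurd this (by exact_mod_cast hp.one_lt.not_ge)

theorem stmt12_general {ι : Type*} [Preorder ι]
    (S : Finset ℕ)
    (R : Subring ℚ) (hR : R = Subring.closure ((fun p : ℕ => (p : ℚ)⁻¹) '' S))
    (Q : ι → Type*) [∀ i, AddCommGroup (Q i)] [∀ i, Module R (Q i)]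
    [∀ i, Module.Finite R (Q i)]
    (htf : ∀ (i : ι) (n : ℤ) (z : Q i), n • z = 0 → n = 0 ∨ z = 0)
    (ρ : ∀ i j, i ≤ j → (Q j →ₗ[R] Q i)) :
    Function.Injective
      (toComp (↥(limSub Q (fun i j h => (ρ i j h).toAddMonoidHom))) NN) ∧
    ∀ x : ↥(gcomp (↥(limSub Q (fun i j h => (ρ i j h).toAddMonoidHom))) NN),
      (∀ i : ι,
        (Submodule.Quotient.mk
            (ratEmb _
              ((compMap ((Pi.evalAddMonoidHom Q i).comp
                  (limSub Q (fun i j h => (ρ i j h).toAddMonoidHom)).subtype) NN) x)) :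
          (ℚ ⊗[ℤ] ↥(gcomp (Q i) NN)) ⧸ WW (Q i)) = 0) ↔
      x ∈ (toComp (↥(limSub Q (fun i j h => (ρ i j h).toAddMonoidHom))) NN).range := by
  subst hR
  have : IsNoetherianRing (Subring.closure ((fun p : ℕ => (p : ℚ)⁻¹) '' S)) :=
    is_noetherian_subring_closure _ (S.finite_toSet.image _)
  have (i : ι) : IsAddTorsionFree (Q i) :=
    Module.isTorsionFree_int_iff_isAddTorsionFree.1 (.of_smul_eq_zero (htf i))
  have hinj (i : ι) : Function.Injective (toComp (Q i) NN) :=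
    toComp_injective_of_subring_rat (closure_inv_natCast_ne_top S) (Q i)
  refine ⟨toComp_limSub_injective _ hinj, fun x => ?_⟩
  simp only [Submodule.Quotient.mk_eq_zero, ratEmb_mem_WW_iff]
  exact (mem_range_toComp_limSub_iff _ hinj x).symm

/-- Let `(Q_E, ρ)` be an inverse system, over a directed index set, of finitely generated
torsion-free modules over `ℤ_S`, and `Q = lim_E Q_E`. Then the sequence
`0 → Q → Q̂ → ∏_E (ℚ ⊗ Q̂_E)/(ℚ ⊗ Q_E)` is exact, where `Q̂ = lim_n Q/nQ` is the profinite
completion and the right-hand map is induced by the natural maps `Q̂ → Q̂_E`. -/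
theorem stmt12 {ι : Type*} [Preorder ι] [IsDirected ι (· ≤ ·)] [Nonempty ι]
    (S : Finset ℕ) (hS : ∀ p ∈ S, p.Prime)
    (R : Subring ℚ) (hR : R = Subring.closure ((fun p : ℕ => (p : ℚ)⁻¹) '' S))
    (Q : ι → Type*) [∀ i, AddCommGroup (Q i)] [∀ i, Module R (Q i)]
    [∀ i, Module.Finite R (Q i)]
    (htf : ∀ (i : ι) (n : ℤ) (z : Q i), n • z = 0 → n = 0 ∨ z = 0)
    (ρ : ∀ i j, i ≤ j → (Q j →ₗ[R] Q i))
    (hρrefl : ∀ i x, ρ i i le_rfl x = x)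
    (hρtrans : ∀ i j k (h1 : i ≤ j) (h2 : j ≤ k) (x : Q k),
      ρ i j h1 (ρ j k h2 x) = ρ i k (h1.trans h2) x) :
    Function.Injective
      (toComp (↥(limSub Q (fun i j h => (ρ i j h).toAddMonoidHom))) NN) ∧
    ∀ x : ↥(gcomp (↥(limSub Q (fun i j h => (ρ i j h).toAddMonoidHom))) NN),
      (∀ i : ι,
        (Submodule.Quotient.mk
            (ratEmb _
              ((compMap ((Pi.evalAddMonoidHom Q i).comp
                  (limSub Q (fun i j h => (ρ i j h).toAddMonoidHom)).subtype) NN) x)) :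
          (ℚ ⊗[ℤ] ↥(gcomp (Q i) NN)) ⧸ WW (Q i)) = 0) ↔
      x ∈ (toComp (↥(limSub Q (fun i j h => (ρ i j h).toAddMonoidHom))) NN).range :=
  stmt12_general S R hR Q htf ρ
end
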